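/- Let p : ℝ → ℝ be measurable with 0 ≤ p(z) ≤ M for some M and all z, let τ > 0, define Z(c) = ∫_ℝ p(z)·N(z|c,τ) dz with Z(c) > 0 for every c, and let ẑ(c) = ( ∫_ℝ z·p(z)·N(z|c,τ) dz ) / Z(c). Then ẑ is differentiable on ℝ with d/dc ẑ(c) = τ^z(c) / τ, where τ^z(c) = ( ∫_ℝ (z − ẑ(c))² · p(z) · N(z|c,τ) dz ) / Z(c) is the posterior variance; consequently ∂/∂c g_out(c,τ,y) = (1/τ)·(τ^z(c)/τ − 1), the expression used for τ_t^s = −∂g_out/∂c in the GAMP algorithm. -/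

import Mathlib

/-!
Differentiating the Gaussian in its mean gives `∂_c N(z|c,τ) = (z - c)/τ · N(z|c,τ)`, so the
unnormalised moments `m_k(c) = ∫ z^k p(z) N(z|c,τ) dz` satisfy `τ m_k' = m_{k+1} - c m_k`.
Differentiation under the integral sign is legitimate because for `|c - c₀| < 1` the density
`N(·|c,τ)` is dominated by a multiple of `N(·|c₀,2τ)`, which has moments of every order.
The quotient rule applied to `ẑ = m₁/m₀` then gives `τ ẑ' = (m₂m₀ - m₁²)/m₀² = τᶻ`.
-/

open MeasureTheory

noncomputable def gaussianPDF (x μ v : ℝ) : ℝ :=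
  (2 * Real.pi * v) ^ (-(1 : ℝ) / 2) * Real.exp (-(x - μ) ^ 2 / (2 * v))

/-- The normalizing constant `Z(c)` of the tilted density. -/
noncomputable def Zfun (p : ℝ → ℝ) (τ c : ℝ) : ℝ :=
  ∫ z : ℝ, p z * gaussianPDF z c τ

/-- The posterior mean `ẑ(c)` of the tilted density `p(z)·N(z|c,τ)/Z(c)`. -/
noncomputable def zhat (p : ℝ → ℝ) (τ c : ℝ) : ℝ :=
  (∫ z : ℝ, z * p z * gaussianPDF z c τ) / Zfun p τ c

/-- The posterior variance `τᶻ(c)` of the tilted density. -/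
noncomputable def tauZ (p : ℝ → ℝ) (τ c : ℝ) : ℝ :=
  (∫ z : ℝ, (z - zhat p τ c) ^ 2 * p z * gaussianPDF z c τ) / Zfun p τ c

lemma gaussianPDF_nonneg {τ : ℝ} (hτ : 0 ≤ τ) (z c : ℝ) : 0 ≤ gaussianPDF z c τ := by
  unfold gaussianPDF; positivity

lemma continuous_gaussianPDF (c τ : ℝ) : Continuous fun z => gaussianPDF z c τ := by
  unfold gaussianPDF; fun_prop

lemma gaussianPDF_eq_gaussianPDFReal {τ : ℝ} (hτ : 0 ≤ τ) (z c : ℝ) :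
    gaussianPDF z c τ = ProbabilityTheory.gaussianPDFReal c τ.toNNReal z := by
  rw [gaussianPDF, ProbabilityTheory.gaussianPDFReal, Real.coe_toNNReal _ hτ, Real.sqrt_eq_rpow,
    ← Real.rpow_neg (by positivity)]
  norm_num

lemma integrable_one_add_abs_pow_mul_gaussianPDF {τ : ℝ} (hτ : 0 < τ) (n : ℕ) (c : ℝ) :
    Integrable (fun z => (1 + |z|) ^ n * gaussianPDF z c τ) := by
  have hv : τ.toNNReal ≠ 0 := by simpa using hτ
  have hmemLp : MemLp (fun z : ℝ => 1 + ‖z‖) n (ProbabilityTheory.gaussianReal c τ.toNNReal) :=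
    (memLp_const (1 : ℝ)).add
      (ProbabilityTheory.memLp_id_gaussianReal' n (ENNReal.natCast_ne_top n)).norm
  have hmom : Integrable (fun z : ℝ => ‖1 + ‖z‖‖ ^ n)
      (ProbabilityTheory.gaussianReal c τ.toNNReal) := hmemLp.integrable_norm_pow'
  rw [ProbabilityTheory.gaussianReal_of_var_ne_zero _ hv,
    integrable_withDensity_iff_integrable_smul' (ProbabilityTheory.measurable_gaussianPDF _ _)
      (ae_of_all _ fun _ => ProbabilityTheory.gaussianPDF_lt_top)] at hmom
  refine hmom.congr (ae_of_all _ fun z => ?_)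
  simp only [Real.norm_eq_abs, ProbabilityTheory.gaussianPDF, smul_eq_mul,
    ENNReal.toReal_ofReal (ProbabilityTheory.gaussianPDFReal_nonneg _ _ _),
    gaussianPDF_eq_gaussianPDFReal hτ.le]
  rw [abs_of_nonneg (by positivity), mul_comm]

lemma hasDerivAt_gaussianPDF_mean (z c τ : ℝ) :
    HasDerivAt (fun c => gaussianPDF z c τ) ((z - c) / τ * gaussianPDF z c τ) c := by
  have h : HasDerivAt (fun c => -(z - c) ^ 2 / (2 * τ)) ((z - c) / τ) c :=
    ((((hasDerivAt_id c).const_sub z).pow 2).neg.div_const (2 * τ)).congr_deriv (by simp; ring)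
  exact (h.exp.const_mul _).congr_deriv (by rw [gaussianPDF]; ring)

lemma gaussianPDF_le_of_abs_sub_le_one {τ : ℝ} (hτ : 0 < τ) {c c₀ : ℝ} (hc : |c - c₀| ≤ 1)
    (z : ℝ) : gaussianPDF z c τ ≤ √2 * Real.exp (1 / (2 * τ)) * gaussianPDF z c₀ (2 * τ) := by
  have hnorm : ∀ a : ℝ, 0 < a → a ^ (-(1 : ℝ) / 2) = √2 * (2 * a) ^ (-(1 : ℝ) / 2) := by
    intro a ha
    rw [Real.mul_rpow zero_le_two ha.le, ← mul_assoc, Real.sqrt_eq_rpow,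
      ← Real.rpow_add zero_lt_two]
    norm_num
  have hexp : -(z - c) ^ 2 / (2 * τ) ≤ 1 / (2 * τ) + -(z - c₀) ^ 2 / (2 * (2 * τ)) := by
    have hsq : (z - c₀) ^ 2 ≤ 2 * (z - c) ^ 2 + 2 := by
      nlinarith [sq_nonneg (z - c - (c - c₀)), sq_abs (c - c₀), abs_nonneg (c - c₀)]
    have hdiff : 1 / (2 * τ) + -(z - c₀) ^ 2 / (2 * (2 * τ)) - -(z - c) ^ 2 / (2 * τ)
        = (2 * (z - c) ^ 2 + 2 - (z - c₀) ^ 2) / (4 * τ) := by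
      field_simp; ring
    linarith [div_nonneg (sub_nonneg.2 hsq) (by positivity : (0 : ℝ) ≤ 4 * τ)]
  calc gaussianPDF z c τ
      ≤ (2 * Real.pi * τ) ^ (-(1 : ℝ) / 2) *
          (Real.exp (1 / (2 * τ)) * Real.exp (-(z - c₀) ^ 2 / (2 * (2 * τ)))) := by
        rw [gaussianPDF, ← Real.exp_add]
        gcongr
    _ = √2 * Real.exp (1 / (2 * τ)) * gaussianPDF z c₀ (2 * τ) := by
        rw [gaussianPDF, hnorm _ (by positivity)]; ring_nf

lemma integrable_mul_gaussianPDF {q : ℝ → ℝ} (hq : AEStronglyMeasurable q) {C : ℝ} {n : ℕ}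
    (hbd : ∀ z, |q z| ≤ C * (1 + |z|) ^ n) {τ : ℝ} (hτ : 0 < τ) (c : ℝ) :
    Integrable (fun z => q z * gaussianPDF z c τ) := by
  refine ((integrable_one_add_abs_pow_mul_gaussianPDF hτ n c).const_mul C).mono'
    (hq.mul (continuous_gaussianPDF c τ).aestronglyMeasurable) (ae_of_all _ fun z => ?_)
  have hφ := gaussianPDF_nonneg hτ.le z c
  rw [norm_mul, Real.norm_eq_abs, Real.norm_of_nonneg hφ, ← mul_assoc]
  exact mul_le_mul_of_nonneg_right (hbd z) hφ

lemma hasDerivAt_integral_mul_gaussianPDF {q : ℝ → ℝ} (hq : AEStronglyMeasurable q) {C : ℝ}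
    {n : ℕ} (hbd : ∀ z, |q z| ≤ C * (1 + |z|) ^ n) {τ : ℝ} (hτ : 0 < τ) (c₀ : ℝ) :
    HasDerivAt (fun c => ∫ z, q z * gaussianPDF z c τ)
      (∫ z, q z * ((z - c₀) / τ * gaussianPDF z c₀ τ)) c₀ := by
  have hC : 0 ≤ C := by simpa using (abs_nonneg _).trans (hbd 0)
  have hdist : ∀ z, ∀ c ∈ Metric.ball c₀ 1, |z - c| ≤ (1 + |c₀|) * (1 + |z|) := by
    intro z c hc
    rw [Metric.mem_ball, Real.dist_eq] at hc
    have := abs_sub_abs_le_abs_sub c c₀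
    have := abs_sub z c
    nlinarith [abs_nonneg z, abs_nonneg c₀]
  refine (hasDerivAt_integral_of_dominated_loc_of_deriv_le (Metric.ball_mem_nhds c₀ one_pos)
    (.of_forall fun c => (integrable_mul_gaussianPDF hq hbd hτ c).aestronglyMeasurable)
    (integrable_mul_gaussianPDF hq hbd hτ c₀)
    (hq.mul (((continuous_id.sub continuous_const).div_const τ).mul
      (continuous_gaussianPDF c₀ τ)).aestronglyMeasurable)
    (bound := fun z => C * (1 + |c₀|) / τ * √2 * Real.exp (1 / (2 * τ)) *
      ((1 + |z|) ^ (n + 1) * gaussianPDF z c₀ (2 * τ)))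
    (ae_of_all _ fun z c hc => ?_)
    ((integrable_one_add_abs_pow_mul_gaussianPDF (by positivity) (n + 1) c₀).const_mul _)
    (ae_of_all _ fun z c _ => (hasDerivAt_gaussianPDF_mean z c τ).const_mul (q z))).2
  have hle := gaussianPDF_le_of_abs_sub_le_one hτ (le_of_lt (Metric.mem_ball.1 hc)) z
  rw [norm_mul, norm_mul, norm_div, Real.norm_eq_abs, Real.norm_eq_abs, Real.norm_of_nonneg hτ.le,
    Real.norm_of_nonneg (gaussianPDF_nonneg hτ.le z c)]
  calc |q z| * (|z - c| / τ * gaussianPDF z c τ)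
      ≤ C * (1 + |z|) ^ n * ((1 + |c₀|) * (1 + |z|) / τ *
          (√2 * Real.exp (1 / (2 * τ)) * gaussianPDF z c₀ (2 * τ))) := by
        have := gaussianPDF_nonneg hτ.le z c
        gcongr
        exacts [hbd z, hdist z c hc]
    _ = _ := by ring

noncomputable def tiltedMoment (p : ℝ → ℝ) (τ : ℝ) (k : ℕ) (c : ℝ) : ℝ :=
  ∫ z, z ^ k * p z * gaussianPDF z c τ

section TiltedMoment

variable {p : ℝ → ℝ} {C : ℝ} {n : ℕ} {τ : ℝ}

lemma abs_pow_mul_le (hbd : ∀ z, |p z| ≤ C * (1 + |z|) ^ n) (k : ℕ) (z : ℝ) :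
    |z ^ k * p z| ≤ C * (1 + |z|) ^ (n + k) := by
  rw [abs_mul, abs_pow]
  calc |z| ^ k * |p z| ≤ (1 + |z|) ^ k * (C * (1 + |z|) ^ n) :=
        mul_le_mul (pow_le_pow_left₀ (abs_nonneg z) (by linarith) k) (hbd z) (abs_nonneg _)
          (by positivity)
    _ = C * (1 + |z|) ^ (n + k) := by ring

lemma integrable_pow_mul_gaussianPDF (hp : AEStronglyMeasurable p)
    (hbd : ∀ z, |p z| ≤ C * (1 + |z|) ^ n) (hτ : 0 < τ) (k : ℕ) (c : ℝ) :
    Integrable (fun z => z ^ k * p z * gaussianPDF z c τ) :=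
  integrable_mul_gaussianPDF ((continuous_pow k).aestronglyMeasurable.mul hp)
    (abs_pow_mul_le hbd k) hτ c

lemma hasDerivAt_tiltedMoment (hp : AEStronglyMeasurable p)
    (hbd : ∀ z, |p z| ≤ C * (1 + |z|) ^ n) (hτ : 0 < τ) (k : ℕ) (c : ℝ) :
    HasDerivAt (tiltedMoment p τ k)
      ((tiltedMoment p τ (k + 1) c - c * tiltedMoment p τ k c) / τ) c := by
  refine (hasDerivAt_integral_mul_gaussianPDF ((continuous_pow k).aestronglyMeasurable.mul hp)
    (abs_pow_mul_le hbd k) hτ c).congr_deriv ?_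
  calc ∫ z, z ^ k * p z * ((z - c) / τ * gaussianPDF z c τ)
      = ∫ z, (z ^ (k + 1) * p z * gaussianPDF z c τ
          - c * (z ^ k * p z * gaussianPDF z c τ)) / τ :=
        integral_congr_ae (ae_of_all _ fun z => by ring)
    _ = _ := by
        rw [integral_div, integral_sub (integrable_pow_mul_gaussianPDF hp hbd hτ (k + 1) c)
          ((integrable_pow_mul_gaussianPDF hp hbd hτ k c).const_mul c), integral_const_mul]
        rfl

lemma integral_sub_sq_mul_eq_tiltedMoment (hp : AEStronglyMeasurable p)
    (hbd : ∀ z, |p z| ≤ C * (1 + |z|) ^ n) (hτ : 0 < τ) (a c : ℝ) :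
    ∫ z, (z - a) ^ 2 * p z * gaussianPDF z c τ
      = tiltedMoment p τ 2 c - 2 * a * tiltedMoment p τ 1 c + a ^ 2 * tiltedMoment p τ 0 c := by
  have hint := integrable_pow_mul_gaussianPDF hp hbd hτ
  calc ∫ z, (z - a) ^ 2 * p z * gaussianPDF z c τ
      = ∫ z, z ^ 2 * p z * gaussianPDF z c τ - 2 * a * (z ^ 1 * p z * gaussianPDF z c τ)
          + a ^ 2 * (z ^ 0 * p z * gaussianPDF z c τ) :=
        integral_congr_ae (ae_of_all _ fun z => by ring)
    _ = _ := by
        have hsub : Integrable fun z => z ^ 2 * p z * gaussianPDF z c τ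
            - 2 * a * (z ^ 1 * p z * gaussianPDF z c τ) := (hint 2 c).sub ((hint 1 c).const_mul _)
        rw [integral_add hsub ((hint 0 c).const_mul _),
          integral_sub (hint 2 c) ((hint 1 c).const_mul _), integral_const_mul,
          integral_const_mul]
        rfl

end TiltedMoment

lemma Zfun_eq_tiltedMoment (p : ℝ → ℝ) (τ c : ℝ) : Zfun p τ c = tiltedMoment p τ 0 c := by
  simp [Zfun, tiltedMoment]

lemma zhat_eq_div_tiltedMoment (p : ℝ → ℝ) (τ c : ℝ) :
    zhat p τ c = tiltedMoment p τ 1 c / tiltedMoment p τ 0 c := by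
  simp [zhat, tiltedMoment, Zfun_eq_tiltedMoment]

lemma tauZ_eq_tiltedMoment {p : ℝ → ℝ} (hp : AEStronglyMeasurable p) {C : ℝ} {n : ℕ}
    (hbd : ∀ z, |p z| ≤ C * (1 + |z|) ^ n) {τ : ℝ} (hτ : 0 < τ) (c : ℝ) :
    tauZ p τ c = (tiltedMoment p τ 2 c * tiltedMoment p τ 0 c - tiltedMoment p τ 1 c ^ 2)
      / tiltedMoment p τ 0 c ^ 2 := by
  rw [tauZ, integral_sub_sq_mul_eq_tiltedMoment hp hbd hτ, zhat_eq_div_tiltedMoment,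
    Zfun_eq_tiltedMoment]
  rcases eq_or_ne (tiltedMoment p τ 0 c) 0 with h0 | h0
  · simp [h0]
  · field_simp
    ring

/-- `d/dc ẑ(c) = τᶻ(c)/τ`, hence `∂/∂c g_out(c,τ,y) = (1/τ)(τᶻ(c)/τ − 1)`,
the expression used for `τᵗˢ = −∂g_out/∂c` in the GAMP algorithm. -/
theorem deriv_zhat_eq_posterior_variance
    (p : ℝ → ℝ) (hp : Measurable p) (M : ℝ) (hbd : ∀ z, 0 ≤ p z ∧ p z ≤ M)
    (τ : ℝ) (hτ : 0 < τ) (hZ : ∀ c : ℝ, 0 < Zfun p τ c) :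
    ∀ c : ℝ,
      HasDerivAt (fun c : ℝ => zhat p τ c) (tauZ p τ c / τ) c ∧
      HasDerivAt (fun c : ℝ => (zhat p τ c - c) / τ)
        ((1 / τ) * (tauZ p τ c / τ - 1)) c := by
  intro c
  have hgrowth : ∀ z, |p z| ≤ M * (1 + |z|) ^ 0 := fun z => by
    simpa [abs_of_nonneg (hbd z).1] using (hbd z).2
  have hmoment := hasDerivAt_tiltedMoment hp.aestronglyMeasurable hgrowth hτ
  have hZc : tiltedMoment p τ 0 c ≠ 0 := by
    rw [← Zfun_eq_tiltedMoment]; exact (hZ c).ne'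
  have hzhat : HasDerivAt (fun c => zhat p τ c) (tauZ p τ c / τ) c := by
    simp_rw [zhat_eq_div_tiltedMoment]
    refine ((hmoment 1 c).div (hmoment 0 c) hZc).congr_deriv ?_
    rw [tauZ_eq_tiltedMoment hp.aestronglyMeasurable hgrowth hτ]
    field_simp
    ring
  exact ⟨hzhat, ((hzhat.sub (hasDerivAt_id c)).div_const τ).congr_deriv (by field_simp)⟩
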